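/- arXiv:2512.01691 — 4 statements merged into one kernel-verified Lean document; each statement's English description precedes it below -/
import Mathlib

section
/- Let V be a real vector space, let ⋆ : V × V → V be a commutative bilinear product, let μ ∈ ℝ, and let R : V × V → End(V) satisfy R(x, y) = −R(y, x) and the first Bianchi identity R(x, y)z + R(y, z)x + R(z, x)y = 0 for all x, y, z ∈ V. Assume [L_x, L_y] = μ · R(x, y) for all x, y ∈ V. Define C(x, y, z) := Assoc(x, z, y) = (x ⋆ z) ⋆ y − x ⋆ (z ⋆ y). Then C is skew-symmetric in its first two arguments, C(x, y, z) = −C(y, x, z), and satisfies the cyclic identity C(x, y, z) + C(y, z, x) + C(z, x, y) = 0 for all x, y, z ∈ V. -/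
/-- For a commutative bilinear product with `[L_x, L_y] = μ • R x y`,
where `R` is antisymmetric and satisfies the first Bianchi identity, the map
`C(x,y,z) = Assoc(x,z,y)` is skew in its first two arguments and cyclic. -/
theorem stmt7 {V : Type*} [AddCommGroup V] [Module ℝ V]
    (s : V →ₗ[ℝ] V →ₗ[ℝ] V)
    (hcomm : ∀ x y : V, s x y = s y x)
    (μ : ℝ) (R : V → V → (V →ₗ[ℝ] V))
    (hskew : ∀ x y : V, R x y = -R y x)
    (hbianchi : ∀ x y z : V, R x y z + R y z x + R z x y = 0)
    (h : ∀ x y : V, s x ∘ₗ s y - s y ∘ₗ s x = μ • R x y)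
    (C : V → V → V → V)
    (hC : ∀ x y z : V, C x y z = s (s x z) y - s x (s z y)) :
    (∀ x y z : V, C x y z = -C y x z) ∧
    (∀ x y z : V, C x y z + C y z x + C z x y = 0) := by
  have key : ∀ x y z : V, C x y z = -(μ • R x y z) := by
    intro x y z
    have h1 := congrArg (fun f : V →ₗ[ℝ] V => f z) (h x y)
    simp only [LinearMap.sub_apply, LinearMap.comp_apply, LinearMap.smul_apply] at h1
    rw [hC, hcomm (s x z) y, hcomm z y]
    linear_combination (norm := module) -h1
  constructor
  · intro x y z
    rw [key, key, hskew x y]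
    simp
  · intro x y z
    rw [key, key, key]
    have := hbianchi x y z
    have h2 : R x y z + R y z x + R z x y = 0 := this
    rw [show (-(μ • R x y z) + -(μ • R y z x) + -(μ • R z x y) : V)
        = -(μ • (R x y z + R y z x + R z x y)) by module, h2]
    simp
end

section
/- Let V be a real inner product space, κ ∈ ℝ, and let P : V × V → V be a symmetric bilinear map (P(x, y) = P(y, x)). Define S(x, y, z) := P(P(x, y), z) + κ(2⟨x, y⟩z + ⟨x, z⟩y + ⟨y, z⟩x). Then S is totally symmetric in (x, y, z) if and only if the commutator condition [L_y, L_z]x = κ(⟨x, y⟩z − ⟨x, z⟩y) holds for all x, y, z ∈ V, where L_y(x) = P(y, x). -/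
open scoped RealInnerProductSpace

/-- For a symmetric bilinear map `P`, the map
`S(x,y,z) = P(P(x,y),z) + κ(2⟪x,y⟫z + ⟪x,z⟫y + ⟪y,z⟫x)` is totally symmetric iff
`[L_y, L_z]x = κ(⟪x,y⟫z − ⟪x,z⟫y)` for all `x, y, z`. -/
theorem stmt8 {V : Type*} [NormedAddCommGroup V] [InnerProductSpace ℝ V] (κ : ℝ)
    (P : V →ₗ[ℝ] V →ₗ[ℝ] V)
    (hsymm : ∀ x y : V, P x y = P y x)
    (S : V → V → V → V)
    (hS : ∀ x y z : V, S x y z =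
      P (P x y) z + κ • ((2 * ⟪x, y⟫) • z + ⟪x, z⟫ • y + ⟪y, z⟫ • x)) :
    ((∀ x y z : V, S x y z = S y x z) ∧ (∀ x y z : V, S x y z = S x z y)) ↔
      (∀ x y z : V, (P y ∘ₗ P z - P z ∘ₗ P y) x = κ • (⟪x, y⟫ • z - ⟪x, z⟫ • y)) := by
  constructor
  · rintro ⟨-, h2⟩ x y z
    have h := h2 x y z
    rw [hS, hS, real_inner_comm z y] at h
    simp only [LinearMap.sub_apply, LinearMap.comp_apply]
    rw [hsymm y (P z x), hsymm z (P y x), hsymm z x, hsymm y x]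
    linear_combination (norm := module) -h
  · intro h
    refine ⟨?_, ?_⟩ <;> intro x y z <;> rw [hS, hS]
    · rw [hsymm x y, real_inner_comm x y]
      module
    · have h' := h x y z
      simp only [LinearMap.sub_apply, LinearMap.comp_apply] at h'
      rw [hsymm y (P z x), hsymm z (P y x), hsymm z x, hsymm y x] at h'
      rw [real_inner_comm z y]
      linear_combination (norm := module) -h'
end

section
/- Let V be a real inner product space, κ ∈ ℝ, and let P : V × V → V be a symmetric bilinear map (P(x, y) = P(y, x)). Define F(x, y, w) := P(P(x, y), w) + κ(2⟨x, y⟩w + ⟨x, w⟩y + ⟨y, w⟩x) and ρ(z, w)(x) := κ(⟨w, x⟩z − ⟨z, x⟩w). Then for all x, y, z, w ∈ V the following identity holds: F(P(x, y), w, z) − F(P(x, y), z, w) + P(F(x, y, z), w) − P(F(x, y, w), z) = ρ(z, w)(P(x, y)) − P(ρ(z, w)(x), y) − P(x, ρ(z, w)(y)). -/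
open scoped RealInnerProductSpace

/-- The formal integrability (Ricci) identity for the Hesse-Frobenius
prolongation system: with `F(x,y,w) = P(P(x,y),w) + κ(2⟪x,y⟫w + ⟪x,w⟫y + ⟪y,w⟫x)` and
`ρ(z,w)(x) = κ(⟪w,x⟫z − ⟪z,x⟫w)`, the alternation of the formal second derivative of `P`
equals the curvature action on `P`. -/
theorem stmt9 {V : Type*} [NormedAddCommGroup V] [InnerProductSpace ℝ V] (κ : ℝ)
    (P : V →ₗ[ℝ] V →ₗ[ℝ] V)
    (hsymm : ∀ x y : V, P x y = P y x)
    (F : V → V → V → V)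
    (hF : ∀ x y w : V, F x y w =
      P (P x y) w + κ • ((2 * ⟪x, y⟫) • w + ⟪x, w⟫ • y + ⟪y, w⟫ • x))
    (ρ : V → V → V → V)
    (hρ : ∀ z w x : V, ρ z w x = κ • (⟪w, x⟫ • z - ⟪z, x⟫ • w)) :
    ∀ x y z w : V,
      F (P x y) w z - F (P x y) z w + P (F x y z) w - P (F x y w) z
        = ρ z w (P x y) - P (ρ z w x) y - P x (ρ z w y) := by
  intro x y z w
  simp only [hF, hρ, map_add, map_sub, map_smul, LinearMap.add_apply, LinearMap.sub_apply,
    LinearMap.smul_apply, smul_add, smul_sub]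
  rw [real_inner_comm w ((P x) y), real_inner_comm z ((P x) y), real_inner_comm w x,
    real_inner_comm z x, real_inner_comm w y, real_inner_comm z y, real_inner_comm z w,
    hsymm z y, hsymm z w, hsymm y w]
  module
end

section
/- Let V be a real inner product space, κ ∈ ℝ, and let P : V × V → V be a symmetric bilinear map such that the trilinear form ⟨P(x, y), z⟩ is totally symmetric in (x, y, z). Then the following are equivalent: (1) [L_y, L_z]x = κ(⟨x, y⟩z − ⟨x, z⟩y) for all x, y, z ∈ V, where L_y(x) = P(y, x); (2) ⟨P(x, y), P(z, w)⟩ − ⟨P(x, z), P(y, w)⟩ = −κ(⟨x, y⟩⟨z, w⟩ − ⟨x, z⟩⟨y, w⟩) for all x, y, z, w ∈ V. -/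
open scoped RealInnerProductSpace

/-- For a symmetric bilinear map `P` whose cubic form `⟪P(x,y),z⟫` is totally
symmetric, the associator-curvature condition `[L_y,L_z]x = κ(⟪x,y⟫z − ⟪x,z⟫y)` is
equivalent to the quadratic identity
`⟪P(x,y),P(z,w)⟫ − ⟪P(x,z),P(y,w)⟫ = −κ(⟪x,y⟫⟪z,w⟫ − ⟪x,z⟫⟪y,w⟫)`. -/
theorem stmt10 {V : Type*} [NormedAddCommGroup V] [InnerProductSpace ℝ V] (κ : ℝ)
    (P : V →ₗ[ℝ] V →ₗ[ℝ] V)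
    (hsymm : ∀ x y : V, P x y = P y x)
    (hsymm3 : ∀ x y z : V, ⟪P x y, z⟫ = ⟪P x z, y⟫) :
    (∀ x y z : V, (P y ∘ₗ P z - P z ∘ₗ P y) x = κ • (⟪x, y⟫ • z - ⟪x, z⟫ • y)) ↔
      (∀ x y z w : V,
        ⟪P x y, P z w⟫ - ⟪P x z, P y w⟫
          = -κ * (⟪x, y⟫ * ⟪z, w⟫ - ⟪x, z⟫ * ⟪y, w⟫)) := by
  have hPP : ∀ a b c w : V, ⟪P a (P b c), w⟫ = ⟪P b c, P a w⟫ := by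
    intro a b c w
    rw [hsymm3, real_inner_comm]
  constructor
  · intro h x y z w
    have h1 := congrArg (fun v => ⟪v, w⟫) (h x z y)
    simp only [LinearMap.sub_apply, LinearMap.comp_apply, inner_sub_left,
      real_inner_smul_left, inner_smul_left, RCLike.ofReal_real_eq_id, id] at h1
    simp only [starRingEnd_apply, star_trivial] at h1
    rw [hPP, hPP, hsymm y x, hsymm z x] at h1
    rw [h1]; ring
  · intro h x y z
    apply ext_inner_right ℝ
    intro w
    have h1 := h x z y w
    simp only [LinearMap.sub_apply, LinearMap.comp_apply, inner_sub_left,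
      real_inner_smul_left, inner_smul_left, RCLike.ofReal_real_eq_id, id]
    simp only [starRingEnd_apply, star_trivial]
    rw [hPP, hPP, hsymm z x, hsymm y x]
    rw [h1]; ring
end
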